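/- arXiv:0705.1117 — 7 statements merged into one kernel-verified Lean document; each statement's English description precedes it below -/
import Mathlib

section
/- (Lemma 2.2.) Suppose τ𝒳 = 𝒳. If A → B → C → ΣA is a distinguished triangle in 𝖳, then A → B is an 𝒳-monomorphism if and only if B → C is an 𝒳-epimorphism. -/
/-!
For a distinguished triangle `A → B → Z → A⟦1⟧` with third morphism `h`, the long exact
Hom-sequences say that `a : A ⟶ X` factors through `f` iff `h ≫ a⟦1⟧' = 0`, and that
`p : Y ⟶ Z` factors through `g` iff `p ≫ h = 0`. Nondegeneracy of the Serre pairing turns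
"`p ≫ h = 0` for all `p : Y ⟶ Z`" into "`h ≫ w = 0` for all `w : A⟦1⟧ ⟶ S Y`", and
`S Y ≅ (τ Y)⟦1⟧`. So `g` is an `𝒳`-epimorphism iff every `A ⟶ τ Y` with `Y ∈ 𝒳` factors
through `f`; as `τ` is an autoequivalence preserving and reflecting `𝒳`, the objects `τ Y`
are all objects of `𝒳` up to isomorphism.
-/

open CategoryTheory CategoryTheory.Limits CategoryTheory.Pretriangulated

def XMono {C : Type*} [Category C] (𝒳 : Set C) {A B : C} (f : A ⟶ B) : Prop :=
  ∀ (X : C), X ∈ 𝒳 → ∀ (g : A ⟶ X), ∃ h : B ⟶ X, f ≫ h = g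

def XEpi {C : Type*} [Category C] (𝒳 : Set C) {A B : C} (f : A ⟶ B) : Prop :=
  ∀ (X : C), X ∈ 𝒳 → ∀ (g : X ⟶ B), ∃ h : X ⟶ A, h ≫ f = g

structure SerreFunctorData (k : Type*) [Field k] (C : Type*) [Category C]
    [Preadditive C] [Linear k C] where
  S : C ⥤ C
  additive : S.Additive
  linear : S.Linear k
  isEquivalence : S.IsEquivalence
  pairing : ∀ A B : C, (A ⟶ B) ≃ₗ[k] Module.Dual k (B ⟶ S.obj A)
  natB : ∀ {A B B' : C} (f : A ⟶ B) (g : B ⟶ B') (h : B' ⟶ S.obj A),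
    pairing A B' (f ≫ g) h = pairing A B f (g ≫ h)
  natA : ∀ {A A' B : C} (e : A' ⟶ A) (f : A ⟶ B) (h : B ⟶ S.obj A'),
    pairing A' B (e ≫ f) h = pairing A B f (h ≫ S.map e)

namespace CategoryTheory

lemma Functor.forall_mem_iff_forall_obj_mem {C D : Type*} [Category C] [Category D]
    (F : C ⥤ D) [F.EssSurj] (𝒳 : Set C) (𝒴 : Set D)
    (hiso : ∀ {X Y : D}, (X ≅ Y) → X ∈ 𝒴 → Y ∈ 𝒴) (hF : ∀ X, X ∈ 𝒳 ↔ F.obj X ∈ 𝒴)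
    (P : D → Prop) (hP : ∀ {X Y : D}, (X ≅ Y) → P X → P Y) :
    (∀ X ∈ 𝒴, P X) ↔ ∀ Y ∈ 𝒳, P (F.obj Y) := by
  refine ⟨fun h Y hY => h _ ((hF Y).1 hY), fun h X hX => ?_⟩
  have e := F.objObjPreimageIso X
  exact hP e (h _ ((hF _).2 (hiso e.symm hX)))

lemma Functor.forall_comp_map_eq_zero_iff {C D : Type*} [Category C] [Category D]
    [HasZeroMorphisms D] (F : C ⥤ D) [F.Full] {X Y : C} {Z W : D} (e : F.obj Y ≅ W)
    (u : Z ⟶ F.obj X) : (∀ a : X ⟶ Y, u ≫ F.map a = 0) ↔ ∀ w : F.obj X ⟶ W, u ≫ w = 0 := by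
  refine ⟨fun h w => ?_, fun h a => by simpa using h (F.map a ≫ e.hom) =≫ e.inv⟩
  obtain ⟨a, ha⟩ := F.map_surjective (w ≫ e.inv)
  calc u ≫ w = (u ≫ F.map a) ≫ e.hom := by simp [ha]
    _ = 0 := by rw [h, zero_comp]

section

variable {C : Type*} [Category C] [Preadditive C] [HasZeroObject C] [HasShift C ℤ]
  [∀ n : ℤ, (CategoryTheory.shiftFunctor C n).Additive] [Pretriangulated C]
  {T : Pretriangulated.Triangle C}

lemma Pretriangulated.Triangle.exists_comp_mor₂_eq_iff (hT : T ∈ distTriang C) {X : C}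
    (p : X ⟶ T.obj₃) :
    (∃ q, q ≫ T.mor₂ = p) ↔ p ≫ T.mor₃ = 0 := by
  refine ⟨?_, fun hp => ?_⟩
  · rintro ⟨q, rfl⟩
    rw [Category.assoc, comp_distTriang_mor_zero₂₃ _ hT, comp_zero]
  · obtain ⟨q, hq⟩ := coyoneda_exact₃ T hT p hp
    exact ⟨q, hq.symm⟩

lemma Pretriangulated.Triangle.exists_mor₁_comp_eq_iff (hT : T ∈ distTriang C) {X : C}
    (a : T.obj₁ ⟶ X) :
    (∃ b, T.mor₁ ≫ b = a) ↔ T.mor₃ ≫ a⟦(1 : ℤ)⟧' = 0 := by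
  refine ⟨?_, fun ha => ?_⟩
  · rintro ⟨b, rfl⟩
    rw [Functor.map_comp, ← Category.assoc, comp_distTriang_mor_zero₃₁ _ hT, zero_comp]
  · have nat := (shiftFunctorCompIsoId C (1 : ℤ) (-1) (add_neg_cancel 1)).hom.naturality a
    dsimp at nat
    obtain ⟨b, hb⟩ := yoneda_exact₂ _ (inv_rot_of_distTriang _ hT) a (by
      change (-(T.mor₃⟦(-1 : ℤ)⟧' ≫
        (shiftFunctorCompIsoId C (1 : ℤ) (-1) (add_neg_cancel 1)).hom.app T.obj₁)) ≫ a = 0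
      rw [Preadditive.neg_comp, Category.assoc, ← nat, ← Functor.map_comp_assoc, ha,
        Functor.map_zero, zero_comp, neg_zero])
    exact ⟨b, hb.symm⟩

end

end CategoryTheory

namespace SerreFunctorData

variable {k : Type*} [Field k] {C : Type*} [Category C] [Preadditive C] [Linear k C]
  (SD : SerreFunctorData k C)

lemma pairing_apply_eq_pairing_id {P Q : C} (u : P ⟶ Q) (w : Q ⟶ SD.S.obj P) :
    SD.pairing P Q u w = SD.pairing P P (𝟙 P) (u ≫ w) := by
  simpa using SD.natB (𝟙 P) u w

lemma eq_zero_of_forall_comp_eq_zero {P Q : C} (u : P ⟶ Q)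
    (hu : ∀ w : Q ⟶ SD.S.obj P, u ≫ w = 0) : u = 0 := by
  apply (SD.pairing P Q).injective
  ext w
  rw [pairing_apply_eq_pairing_id, hu, map_zero, map_zero, LinearMap.zero_apply]

lemma eq_zero_of_forall_precomp_eq_zero {P Q : C} (q : Q ⟶ SD.S.obj P)
    (hq : ∀ p : P ⟶ Q, p ≫ q = 0) : q = 0 := by
  rw [← Module.forall_dual_apply_eq_zero_iff k q]
  intro φ
  obtain ⟨p, rfl⟩ := (SD.pairing P Q).surjective φ
  rw [pairing_apply_eq_pairing_id, hq, map_zero]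

lemma forall_comp_eq_zero_iff {P Q R : C} (u : Q ⟶ R) :
    (∀ p : P ⟶ Q, p ≫ u = 0) ↔ ∀ w : R ⟶ SD.S.obj P, u ≫ w = 0 :=
  ⟨fun h w => SD.eq_zero_of_forall_precomp_eq_zero _ fun p => by
      rw [← Category.assoc, h, zero_comp],
    fun h p => SD.eq_zero_of_forall_comp_eq_zero _ fun w => by rw [Category.assoc, h, comp_zero]⟩

end SerreFunctorData

theorem XMono_iff_XEpi_of_distTriang
    (k : Type*) [Field k] [IsAlgClosed k]
    {C : Type*} [Category C] [Preadditive C] [Linear k C] [HasZeroObject C]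
    [HasShift C ℤ] [∀ n : ℤ, (CategoryTheory.shiftFunctor C n).Additive]
    [Pretriangulated C] [HasBinaryBiproducts C]
    [∀ A B : C, FiniteDimensional k (A ⟶ B)] [IsIdempotentComplete C]
    (SD : SerreFunctorData k C)
    (𝒳 : Set C)
    (hiso : ∀ {A B : C}, (A ≅ B) → A ∈ 𝒳 → B ∈ 𝒳)
    (hsum : ∀ {A B : C}, A ∈ 𝒳 → B ∈ 𝒳 → (A ⊞ B) ∈ 𝒳)
    (hsummand : ∀ {A B : C} (i : A ⟶ B) (r : B ⟶ A), i ≫ r = 𝟙 A → B ∈ 𝒳 → A ∈ 𝒳)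
    -- `τ𝒳 = 𝒳`, where `τ = Σ⁻¹ ∘ S`:
    (hτ : ∀ X : C, X ∈ 𝒳 ↔ ((SD.S.obj X)⟦(-1 : ℤ)⟧) ∈ 𝒳)
    (A B Z : C) (f : A ⟶ B) (g : B ⟶ Z) (h : Z ⟶ A⟦(1 : ℤ)⟧)
    (hT : Triangle.mk f g h ∈ distTriang C) :
    XMono 𝒳 f ↔ XEpi 𝒳 g := by
  have := SD.isEquivalence
  let τ := SD.S ⋙ CategoryTheory.shiftFunctor C (-1 : ℤ)
  have hfactor_iso : ∀ {X Y : C}, (X ≅ Y) →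
      (∀ a : A ⟶ X, ∃ b, f ≫ b = a) → ∀ a : A ⟶ Y, ∃ b, f ≫ b = a := fun e hX a => by
    obtain ⟨b, hb⟩ := hX (a ≫ e.inv)
    exact ⟨b ≫ e.hom, by simp [reassoc_of% hb]⟩
  calc XMono 𝒳 f ↔ ∀ Y ∈ 𝒳, ∀ a : A ⟶ τ.obj Y, ∃ b, f ≫ b = a :=
        τ.forall_mem_iff_forall_obj_mem 𝒳 𝒳 hiso hτ _ hfactor_iso
    _ ↔ ∀ Y ∈ 𝒳, ∀ a : A ⟶ τ.obj Y, h ≫ a⟦(1 : ℤ)⟧' = 0 :=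
        forall₂_congr fun Y _ => forall_congr' (Triangle.exists_mor₁_comp_eq_iff hT)
    _ ↔ ∀ Y ∈ 𝒳, ∀ w : A⟦(1 : ℤ)⟧ ⟶ SD.S.obj Y, h ≫ w = 0 :=
        forall₂_congr fun Y _ =>
          (CategoryTheory.shiftFunctor C (1 : ℤ)).forall_comp_map_eq_zero_iff (shiftNegShift _ 1) h
    _ ↔ ∀ Y ∈ 𝒳, ∀ p : Y ⟶ Z, p ≫ h = 0 :=
        forall₂_congr fun Y _ => (SD.forall_comp_eq_zero_iff h).symm
    _ ↔ XEpi 𝒳 g :=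
        forall₂_congr fun Y _ => forall_congr' fun p =>
          (Triangle.exists_comp_mor₂_eq_iff hT p).symm
end

section
/- Suppose τ𝒳 = 𝒳. Let M → X_M be an 𝒳-preenvelope of an object M and let M → X_M → C → ΣM be a distinguished triangle. Then the morphism X_M → C is an 𝒳-precover of C. (This is the key step in proving that the quotient category 𝖳_𝒳 is triangulated when τ𝒳 = 𝒳: it shows ωσM ≅ M.) -/
/-!
STATEMENT 4.  Same setup as Lemma 2.2, with `τ𝒳 = 𝒳`.  If `M → X_M` is an
`𝒳`-preenvelope of `M` and `M → X_M → C → ΣM` is a distinguished triangle, then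
`X_M → C` is an `𝒳`-precover of `C`.
-/

open CategoryTheory CategoryTheory.Limits CategoryTheory.Pretriangulated

theorem cone_map_of_preenvelope_is_precover
    (k : Type*) [Field k] [IsAlgClosed k]
    {C : Type*} [Category C] [Preadditive C] [Linear k C] [HasZeroObject C]
    [HasShift C ℤ] [∀ n : ℤ, (CategoryTheory.shiftFunctor C n).Additive]
    [Pretriangulated C] [HasBinaryBiproducts C]
    [∀ A B : C, FiniteDimensional k (A ⟶ B)] [IsIdempotentComplete C]
    (SD : SerreFunctorData k C)
    (𝒳 : Set C)
    (hiso : ∀ {A B : C}, (A ≅ B) → A ∈ 𝒳 → B ∈ 𝒳)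
    (hsum : ∀ {A B : C}, A ∈ 𝒳 → B ∈ 𝒳 → (A ⊞ B) ∈ 𝒳)
    (hsummand : ∀ {A B : C} (i : A ⟶ B) (r : B ⟶ A), i ≫ r = 𝟙 A → B ∈ 𝒳 → A ∈ 𝒳)
    -- `τ𝒳 = 𝒳`, where `τ = Σ⁻¹ ∘ S`:
    (hτ : ∀ X : C, X ∈ 𝒳 ↔ ((SD.S.obj X)⟦(-1 : ℤ)⟧) ∈ 𝒳)
    (M XM Z : C) (e : M ⟶ XM) (g : XM ⟶ Z) (h : Z ⟶ M⟦(1 : ℤ)⟧)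
    (hXM : XM ∈ 𝒳) (he : XMono 𝒳 e)
    (hT : Triangle.mk e g h ∈ distTriang C) :
    XEpi 𝒳 g ∧ XM ∈ 𝒳 := by
  refine ⟨?_, hXM⟩
  intro X hX t
  -- Key step: `t ≫ h = 0`.
  have hth : t ≫ h = 0 := by
    -- First: `h ≫ ψ = 0` for every `ψ : M⟦1⟧ ⟶ S X`.
    have key : ∀ ψ : (M⟦(1 : ℤ)⟧ ⟶ SD.S.obj X), h ≫ ψ = 0 := by
      intro ψ
      set ι := shiftFunctorCompIsoId C (1 : ℤ) (-1 : ℤ) (by ring) with hι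
      -- transpose `ψ` to a morphism `M ⟶ τ X`
      set ψ' : M ⟶ (SD.S.obj X)⟦(-1 : ℤ)⟧ :=
        ι.inv.app M ≫ (shiftFunctor C (-1 : ℤ)).map ψ with hψ'
      have hψ : (shiftFunctor C (-1 : ℤ)).map ψ = ι.hom.app M ≫ ψ' := by
        rw [hψ', ← Category.assoc, Iso.hom_inv_id_app, Category.id_comp]
      obtain ⟨χ, hχ⟩ := he _ ((hτ X).mp hX) ψ'
      have h31 : h ≫ e⟦(1 : ℤ)⟧' = 0 := comp_distTriang_mor_zero₃₁ _ hT
      -- naturality of `ι`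
      have hnat : (shiftFunctor C (-1 : ℤ)).map (e⟦(1 : ℤ)⟧') ≫ ι.hom.app XM =
          ι.hom.app M ≫ e := ι.hom.naturality e
      have hzero : (shiftFunctor C (-1 : ℤ)).map h ≫ ι.hom.app M ≫ e = 0 := by
        rw [← hnat, ← Category.assoc, ← Functor.map_comp, h31]
        simp
      apply (shiftFunctor C (-1 : ℤ)).map_injective
      rw [Functor.map_comp, hψ, Functor.map_zero, ← hχ, ← Category.assoc,
        ← Category.assoc]
      simp only [← Category.assoc] at hzero ⊢
      rw [hzero, zero_comp]
    -- use injectivity of the Serre pairing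
    have : (SD.pairing X (M⟦(1 : ℤ)⟧)) (t ≫ h) = 0 := by
      apply LinearMap.ext
      intro ψ
      rw [SD.natB t h ψ, key ψ]
      simp
    have := (SD.pairing X (M⟦(1 : ℤ)⟧)).injective (by simpa using this)
    simpa using this
  obtain ⟨s, hs⟩ := Triangle.coyoneda_exact₃ _ hT t hth
  exact ⟨s, hs.symm⟩
end

section
/- Suppose τ𝒳 = 𝒳. Let X^M → M be an 𝒳-precover of an object M and let C → X^M → M → ΣC be a distinguished triangle. Then the morphism C → X^M is an 𝒳-preenvelope of C. -/
/-!
If `g : Z ⟶ X` with `X ∈ 𝒳`, Serre duality turns the obstruction `h ≫ g⟦1⟧ : M ⟶ X⟦1⟧`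
into morphisms `S⁻¹(X⟦1⟧) ⟶ M`. Since `τ(S⁻¹(X⟦1⟧)) ≅ X`, the object `S⁻¹(X⟦1⟧)` lies in
`𝒳 = τ𝒳`, so these morphisms factor through the precover `p`, and `p ≫ h = 0` kills them.
Hence `h ≫ g⟦1⟧ = 0`, and the long exact Hom sequence of the triangle factors `g` through `e`.
-/

open CategoryTheory CategoryTheory.Limits CategoryTheory.Pretriangulated

namespace CategoryTheory.Pretriangulated

variable {C : Type*} [Category C] [Preadditive C] [HasZeroObject C] [HasShift C ℤ]
  [∀ n : ℤ, (CategoryTheory.shiftFunctor C n).Additive] [Pretriangulated C]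

lemma Triangle.yoneda_exact₁ (T : Triangle C) (hT : T ∈ distTriang C) {X : C} (f : T.obj₁ ⟶ X)
    (hf : T.mor₃ ≫ f⟦(1 : ℤ)⟧' = 0) : ∃ g : T.obj₂ ⟶ X, f = T.mor₁ ≫ g := by
  obtain ⟨g, hg⟩ := Triangle.yoneda_exact₂ _ (rot_of_distTriang _ (rot_of_distTriang _ hT)) _ hf
  obtain ⟨g, rfl⟩ : ∃ g' : T.obj₂ ⟶ X, g'⟦(1 : ℤ)⟧' = g := Functor.map_surjective _ g
  refine ⟨-g, (CategoryTheory.shiftFunctor C (1 : ℤ)).map_injective ?_⟩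
  rw [hg, Functor.map_comp, Functor.map_neg, Preadditive.comp_neg]
  exact Preadditive.neg_comp _ _

end CategoryTheory.Pretriangulated

namespace SerreFunctorData

variable {k : Type*} [Field k] {C : Type*} [Category C] [Preadditive C] [Linear k C]
  (SD : SerreFunctorData k C)

attribute [local instance] SerreFunctorData.isEquivalence

lemma eq_zero_of_forall_comp_eq_zero_s5 {M B : C} (f : M ⟶ B)
    (hf : ∀ q : SD.S.inv.obj B ⟶ M, q ≫ f = 0) : f = 0 := by
  let ε : SD.S.obj (SD.S.inv.obj B) ≅ B := SD.S.asEquivalence.counitIso.app B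
  apply (SD.pairing M B).injective
  ext ψ
  obtain ⟨q, hq⟩ := SD.S.map_surjective (ε.hom ≫ ψ)
  have hψ : ψ = ε.inv ≫ SD.S.map q := by rw [hq, Iso.inv_hom_id_assoc]
  rw [hψ, ← SD.natA, hf, map_zero, map_zero, LinearMap.zero_apply, LinearMap.zero_apply]

lemma inv_obj_shift_mem [HasShift C ℤ] {𝒳 : Set C} (hiso : ∀ {A B : C}, (A ≅ B) → A ∈ 𝒳 → B ∈ 𝒳)
    (hτ : ∀ Y : C, (SD.S.obj Y)⟦(-1 : ℤ)⟧ ∈ 𝒳 → Y ∈ 𝒳) {X : C} (hX : X ∈ 𝒳) :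
    SD.S.inv.obj (X⟦(1 : ℤ)⟧) ∈ 𝒳 :=
  hτ _ <| hiso ((shiftFunctorCompIsoId C (1 : ℤ) (-1) (by norm_num)).symm.app X ≪≫
    (shiftFunctor C (-1 : ℤ)).mapIso (SD.S.asEquivalence.counitIso.app _).symm) hX

end SerreFunctorData

theorem cocone_map_of_precover_is_preenvelope
    (k : Type*) [Field k] [IsAlgClosed k]
    {C : Type*} [Category C] [Preadditive C] [Linear k C] [HasZeroObject C]
    [HasShift C ℤ] [∀ n : ℤ, (CategoryTheory.shiftFunctor C n).Additive]
    [Pretriangulated C] [HasBinaryBiproducts C]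
    [∀ A B : C, FiniteDimensional k (A ⟶ B)] [IsIdempotentComplete C]
    (SD : SerreFunctorData k C)
    (𝒳 : Set C)
    (hiso : ∀ {A B : C}, (A ≅ B) → A ∈ 𝒳 → B ∈ 𝒳)
    (hsum : ∀ {A B : C}, A ∈ 𝒳 → B ∈ 𝒳 → (A ⊞ B) ∈ 𝒳)
    (hsummand : ∀ {A B : C} (i : A ⟶ B) (r : B ⟶ A), i ≫ r = 𝟙 A → B ∈ 𝒳 → A ∈ 𝒳)
    -- `τ𝒳 = 𝒳`, where `τ = Σ⁻¹ ∘ S`: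
    (hτ : ∀ X : C, X ∈ 𝒳 ↔ ((SD.S.obj X)⟦(-1 : ℤ)⟧) ∈ 𝒳)
    (M XM Z : C) (e : Z ⟶ XM) (p : XM ⟶ M) (h : M ⟶ Z⟦(1 : ℤ)⟧)
    (hXM : XM ∈ 𝒳) (hp : XEpi 𝒳 p)
    (hT : Triangle.mk e p h ∈ distTriang C) :
    XMono 𝒳 e ∧ XM ∈ 𝒳 := by
  have hph : p ≫ h = 0 := comp_distTriang_mor_zero₂₃ _ hT
  refine ⟨fun X hX g => ?_, hXM⟩
  have hvanish : h ≫ g⟦(1 : ℤ)⟧' = 0 := SD.eq_zero_of_forall_comp_eq_zero_s5 _ fun q => by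
    obtain ⟨r, rfl⟩ := hp _ (SD.inv_obj_shift_mem hiso (fun Y => (hτ Y).mpr) hX) q
    rw [Category.assoc, reassoc_of% hph, zero_comp, comp_zero]
  obtain ⟨t, ht⟩ := Triangle.yoneda_exact₁ _ hT g hvanish
  exact ⟨t, ht.symm⟩
end

section
/- Let M → X_M → P → ΣM and N → X_N → Q → ΣN be distinguished triangles in 𝖳 with X_N ∈ 𝒳, let μ : M → N be a morphism, and suppose s, s' : P → Q are two morphisms both satisfying (Q → ΣN)∘s = (Σμ)∘(P → ΣM) and (Q → ΣN)∘s' = (Σμ)∘(P → ΣM). Then s − s' factors through the object X_N, and in particular through an object of 𝒳. (This shows that the functor σ on the quotient category 𝖳_𝒳 is well-defined on morphisms.) -/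
open CategoryTheory CategoryTheory.Limits CategoryTheory.Pretriangulated

theorem sub_factorsThrough_of_compatible_fillers
    {C : Type*} [Category C] [Preadditive C] [HasZeroObject C] [HasShift C ℤ]
    [∀ n : ℤ, (CategoryTheory.shiftFunctor C n).Additive] [Pretriangulated C]
    (𝒳 : Set C)
    (M XM P N XN Q : C)
    (fM : M ⟶ XM) (gM : XM ⟶ P) (hM : P ⟶ M⟦(1 : ℤ)⟧)
    (fN : N ⟶ XN) (gN : XN ⟶ Q) (hN : Q ⟶ N⟦(1 : ℤ)⟧)
    (hTM : Triangle.mk fM gM hM ∈ distTriang C)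
    (hTN : Triangle.mk fN gN hN ∈ distTriang C)
    (hXN : XN ∈ 𝒳)
    (μ : M ⟶ N) (s s' : P ⟶ Q)
    (hs : s ≫ hN = hM ≫ μ⟦(1 : ℤ)⟧')
    (hs' : s' ≫ hN = hM ≫ μ⟦(1 : ℤ)⟧') :
    ∃ (a : P ⟶ XN) (b : XN ⟶ Q), a ≫ b = s - s' := by
  have hzero : (s - s') ≫ hN = 0 := by rw [Preadditive.sub_comp, hs, hs', sub_self]
  obtain ⟨a, ha⟩ := Triangle.coyoneda_exact₃ _ hTN (s - s') hzero
  exact ⟨a, gN, ha.symm⟩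
end

section
/- Let Σ^{-1}M → W →e X^M →p M be a distinguished triangle in 𝖳 in which p : X^M → M is an 𝒳-precover and e : W → X^M is an 𝒳-preenvelope. Then for every object L of 𝖳, the map Hom_𝖳(W, Σ^{-1}L)/𝒳(W, Σ^{-1}L) → Hom_𝖳(M, L) induced by the connecting morphism of the triangle (via the identification Hom_𝖳(Σ^{-1}M, Σ^{-1}L) ≅ Hom_𝖳(M, L)) is well-defined and injective, and its image equals the kernel of the precomposition map Hom_𝖳(M, L) → Hom_𝖳(X^M, L), f ↦ f∘p. Equivalently, there is an exact sequence 0 → 𝖳_𝒳(W, Σ^{-1}L) → 𝖳(M, L) → 𝖳(X^M, L). -/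
/-!
STATEMENT 9.  Let `k` be an algebraically closed field and `T` a `k`-linear triangulated
category with finite-dimensional Hom-spaces and split idempotents; let `𝒳` be a class of
objects closed under isomorphisms, finite direct sums and direct summands.  Let
`Σ⁻¹M → W →e X^M →p M` be a distinguished triangle (written in rotated form
`W →e X^M →p M →δ ΣW`) in which `p` is an `𝒳`-precover and `e` is an `𝒳`-preenvelope.
Then for every object `L`, the map `Hom(W, Σ⁻¹L)/𝒳(W, Σ⁻¹L) → Hom(M, L)` induced by the
connecting morphism is well-defined and injective, and its image is the kernel of
`Hom(M, L) → Hom(X^M, L)`, `f ↦ f ∘ p`.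
-/

open CategoryTheory CategoryTheory.Limits CategoryTheory.Pretriangulated

/-- A morphism factors through (some object of) the class `𝒳`. -/
def FactorsThroughClass {C : Type*} [Category C] (𝒳 : Set C) {A B : C} (f : A ⟶ B) : Prop :=
  ∃ (X : C) (g : A ⟶ X) (h : X ⟶ B), X ∈ 𝒳 ∧ g ≫ h = f

/-!
The connecting morphism `δ` sends `φ : W ⟶ Σ⁻¹L` to `δ ≫ Σφ` (read in `Hom(M, L)`). Applying
`Hom(-, L)` to the triangle, its image is the kernel of `- ∘ p`, and `δ ≫ Σφ = 0` exactly when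
`φ` factors through `e`. Since `X^M ∈ 𝒳` and `e` is an `𝒳`-preenvelope, the morphisms factoring
through `e` are exactly those factoring through `𝒳`, which is the kernel of the quotient map
`Hom(W, Σ⁻¹L) → 𝖳_𝒳(W, Σ⁻¹L)`.
-/

lemma factorsThroughClass_iff_exists_comp {C : Type*} [Category C] {𝒳 : Set C} {A B D : C}
    {f : A ⟶ B} (hB : B ∈ 𝒳) (hf : XMono 𝒳 f) (g : A ⟶ D) :
    FactorsThroughClass 𝒳 g ↔ ∃ h : B ⟶ D, f ≫ h = g := by
  constructor
  · rintro ⟨X, a, b, hX, rfl⟩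
    obtain ⟨c, rfl⟩ := hf X hX a
    exact ⟨c ≫ b, (Category.assoc _ _ _).symm⟩
  · rintro ⟨h, rfl⟩
    exact ⟨B, f, h, hB, rfl⟩

section Connecting

variable {C : Type*} [Category C] [Preadditive C] [HasShift C ℤ]
  [∀ n : ℤ, (shiftFunctor C n).Additive]

@[simps]
def connectingMap {M W : C} (δ : M ⟶ W⟦(1 : ℤ)⟧) (L : C) : (W ⟶ L⟦(-1 : ℤ)⟧) →+ (M ⟶ L) where
  toFun φ := δ ≫ φ⟦(1 : ℤ)⟧' ≫ (shiftNegShift L (1 : ℤ)).hom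
  map_zero' := by simp only [Functor.map_zero, zero_comp, comp_zero]
  map_add' _ _ := by simp only [Functor.map_add, Preadditive.add_comp, Preadditive.comp_add]

variable [HasZeroObject C] [Pretriangulated C] {W X M : C} {e : W ⟶ X} {p : X ⟶ M}
  {δ : M ⟶ W⟦(1 : ℤ)⟧}

lemma comp_shift_map_eq_zero_iff (hT : Triangle.mk e p δ ∈ distTriang C) {Y : C} (ψ : W ⟶ Y) :
    δ ≫ ψ⟦(1 : ℤ)⟧' = 0 ↔ ∃ h : X ⟶ Y, e ≫ h = ψ := by
  constructor
  · intro hψ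
    obtain ⟨g : X⟦(1 : ℤ)⟧ ⟶ Y⟦(1 : ℤ)⟧, hg : ψ⟦(1 : ℤ)⟧' = (-e⟦(1 : ℤ)⟧') ≫ g⟩ :=
      Triangle.yoneda_exact₃ _ (rot_of_distTriang _ hT) _ hψ
    refine ⟨(shiftFunctor C (1 : ℤ)).preimage (-g), (shiftFunctor C (1 : ℤ)).map_injective ?_⟩
    rw [Functor.map_comp, hg, Functor.map_preimage, Preadditive.comp_neg, Preadditive.neg_comp]
  · rintro ⟨h, rfl⟩
    have h31 : δ ≫ e⟦(1 : ℤ)⟧' = 0 := comp_distTriang_mor_zero₃₁ _ hT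
    rw [Functor.map_comp, ← Category.assoc, h31, zero_comp]

lemma connectingMap_eq_zero_iff (hT : Triangle.mk e p δ ∈ distTriang C) {L : C}
    (ψ : W ⟶ L⟦(-1 : ℤ)⟧) : connectingMap δ L ψ = 0 ↔ ∃ h : X ⟶ L⟦(-1 : ℤ)⟧, e ≫ h = ψ := by
  rw [← comp_shift_map_eq_zero_iff hT, connectingMap_apply, ← Category.assoc,
    Preadditive.IsIso.comp_right_eq_zero]

lemma exists_connectingMap_eq_iff (hT : Triangle.mk e p δ ∈ distTriang C) {L : C} (f : M ⟶ L) :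
    (∃ φ, connectingMap δ L φ = f) ↔ p ≫ f = 0 := by
  constructor
  · rintro ⟨φ, rfl⟩
    have h23 : p ≫ δ = 0 := comp_distTriang_mor_zero₂₃ _ hT
    rw [connectingMap_apply, ← Category.assoc, h23, zero_comp]
  · intro hf
    obtain ⟨g : W⟦(1 : ℤ)⟧ ⟶ L, rfl : f = δ ≫ g⟩ := Triangle.yoneda_exact₃ _ hT f hf
    refine ⟨(shiftFunctor C (1 : ℤ)).preimage (g ≫ (shiftNegShift L (1 : ℤ)).inv), ?_⟩
    rw [connectingMap_apply, Functor.map_preimage, Category.assoc, Iso.inv_hom_id, Category.comp_id]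

end Connecting

theorem connecting_map_exact_sequence
    (k : Type*) [Field k] [IsAlgClosed k]
    {C : Type*} [Category C] [Preadditive C] [Linear k C] [HasZeroObject C]
    [HasShift C ℤ] [∀ n : ℤ, (CategoryTheory.shiftFunctor C n).Additive]
    [Pretriangulated C] [HasBinaryBiproducts C]
    [∀ A B : C, FiniteDimensional k (A ⟶ B)] [IsIdempotentComplete C]
    (𝒳 : Set C)
    (hiso : ∀ {A B : C}, (A ≅ B) → A ∈ 𝒳 → B ∈ 𝒳)
    (hsum : ∀ {A B : C}, A ∈ 𝒳 → B ∈ 𝒳 → (A ⊞ B) ∈ 𝒳)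
    (hsummand : ∀ {A B : C} (i : A ⟶ B) (r : B ⟶ A), i ≫ r = 𝟙 A → B ∈ 𝒳 → A ∈ 𝒳)
    (M W XM : C) (e : W ⟶ XM) (p : XM ⟶ M) (δ : M ⟶ W⟦(1 : ℤ)⟧)
    (hT : Triangle.mk e p δ ∈ distTriang C)
    (hXM : XM ∈ 𝒳) (hp : XEpi 𝒳 p) (he : XMono 𝒳 e) :
    ∀ L : C,
      (∀ φ φ' : W ⟶ L⟦(-1 : ℤ)⟧,
        δ ≫ φ⟦(1 : ℤ)⟧' ≫ (shiftNegShift L (1 : ℤ)).hom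
          = δ ≫ φ'⟦(1 : ℤ)⟧' ≫ (shiftNegShift L (1 : ℤ)).hom
          ↔ FactorsThroughClass 𝒳 (φ - φ')) ∧
      (∀ f : M ⟶ L,
        (∃ φ : W ⟶ L⟦(-1 : ℤ)⟧,
          δ ≫ φ⟦(1 : ℤ)⟧' ≫ (shiftNegShift L (1 : ℤ)).hom = f) ↔ p ≫ f = 0) := by
  intro L
  refine ⟨fun φ φ' => ?_, exists_connectingMap_eq_iff hT⟩
  change connectingMap δ L φ = connectingMap δ L φ' ↔ _
  rw [← sub_eq_zero, ← map_sub, connectingMap_eq_zero_iff hT,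
    factorsThroughClass_iff_exists_comp hXM he]
end

section
/- (Pointwise form of Proposition 3.1.) Suppose 𝒳 is precovering and preenveloping and τ𝒳 = 𝒳. Let M and N be objects of 𝖳 and let Σ^{-1}M → W → X^M →p M be a distinguished triangle in which p is an 𝒳-precover. Then there is a k-linear isomorphism 𝖳_𝒳(N, M) ≅ (𝖳_𝒳(W, Σ^{-1}(S N)))^∨, where (−)^∨ = Hom_k(−,k). (Thus the quotient category 𝖳_𝒳 has a Serre functor given on objects by N ↦ σ(Σ^{-1}SN), so the Auslander–Reiten translation of 𝖳_𝒳 is induced by τ.) -/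
/-!
STATEMENT 10 (pointwise form of Proposition 3.1).  Let `k` be an algebraically closed
field and `T` a `k`-linear triangulated category with finite-dimensional Hom-spaces,
split idempotents and a Serre functor `S`; let `τ = Σ⁻¹ ∘ S` and let `𝒳` be a
precovering and preenveloping class of objects closed under isomorphisms, finite direct
sums and direct summands with `τ𝒳 = 𝒳`.  If `Σ⁻¹M → W → X^M →p M` is a distinguished
triangle (written in rotated form `W → X^M →p M → ΣW`) in which `p` is an `𝒳`-precover,
then there is a `k`-linear isomorphism `T_𝒳(N, M) ≅ (T_𝒳(W, Σ⁻¹(S N)))^∨`.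
-/

open CategoryTheory CategoryTheory.Limits CategoryTheory.Pretriangulated

/-- The `k`-subspace `𝒳(A,B) ⊆ Hom(A,B)` of morphisms factoring through `𝒳` (for `𝒳`
closed under isomorphisms, sums and summands this set is already a subspace, so taking
the span is harmless). -/
def XHom (k : Type*) [Field k] {C : Type*} [Category C] [Preadditive C] [Linear k C]
    (𝒳 : Set C) (A B : C) : Submodule k (A ⟶ B) :=
  Submodule.span k {f : A ⟶ B | FactorsThroughClass 𝒳 f}

/-!
Since `p` is an `𝒳`-precover, `𝒳(N, M)` is the kernel of `− ≫ δ` on `T(N, M)`. Dually, `τ𝒳 = 𝒳`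
and Serre duality show that the first map `w : Σ⁻¹M → W` of the inverse rotation kills every map
from `W` into `𝒳`, so `𝒳(W, Y)` is the kernel of `w ≫ −`. Both quotients are therefore images of
composition maps. Serre duality identifies the rank of `− ≫ δ` on `T(N, −)` with that of `δ ≫ −`
on `T(−, SN)`, and `Σ⁻¹` carries the latter to `w ≫ −` on `T(−, Σ⁻¹SN)` up to sign and an iso.

The shift is only assumed additive, not `k`-linear, so this last comparison is along an additive
bijection `f` with `f (c • x) = π c (f x)` for some `k`-linear operators `π c`. Over an
algebraically closed field such an `f` still preserves dimension: split along the kernel and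
image of a non-scalar `π c - μ` (these operators commute), and once every `π c` is a scalar
`σ c`, an eigenvector of `f⁻¹ ∘ (d • ·) ∘ f` shows that `σ` is onto.
-/

open Module

section TwistedScalars

variable {k V W : Type*} [Field k] [AddCommGroup V] [Module k V] [AddCommGroup W] [Module k W]

theorem finrank_eq_of_addEquiv_of_map_smul_eq_smul [IsAlgClosed k] [FiniteDimensional k V]
    (f : V ≃+ W) (σ : k → k) (hf : ∀ (c : k) (x : V), f (c • x) = σ c • f x) :
    finrank k V = finrank k W := by
  rcases subsingleton_or_nontrivial V with hV | hV
  · have : Subsingleton W := f.symm.toEquiv.subsingleton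
    simp only [finrank_zero_of_subsingleton]
  obtain ⟨x₀, hx₀⟩ := exists_ne (0 : V)
  have hσ_inj : Function.Injective σ := fun c d h =>
    smul_left_injective k hx₀ (f.injective (by rw [hf, hf, h]))
  have hσ_surj : Function.Surjective σ := by
    intro d
    let h : Module.End k V :=
      { toFun x := f.symm (d • f x)
        map_add' x y := by simp
        map_smul' c x := f.injective (by simp [hf, smul_comm d]) }
    obtain ⟨r, hr⟩ := Module.End.exists_eigenvalue h
    obtain ⟨x, hx⟩ := hr.exists_hasEigenvector
    have hfx : f x ≠ 0 := (map_ne_zero_iff f f.injective).2 hx.2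
    refine ⟨r, smul_left_injective k hfx ?_⟩
    simpa [h, hf] using (congr_arg f hx.apply_eq_smul).symm
  simpa [finrank] using
    congr_arg Cardinal.toNat (lift_rank_eq_of_equiv_equiv σ f ⟨hσ_inj, hσ_surj⟩ hf)

theorem exists_addEquiv_submodule_of_map_smul (f : V ≃+ W) (π : k → Module.End k W)
    (hf : ∀ (c : k) (x : V), f (c • x) = π c (f x)) (F : Submodule k V) (E : Submodule k W)
    (hFE : ∀ x, x ∈ F ↔ f x ∈ E) :
    ∃ (f' : F ≃+ E) (π' : k → Module.End k E), ∀ (c : k) (x : F), f' (c • x) = π' c (f' x) := by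
  have hE : ∀ c, ∀ y ∈ E, π c y ∈ E := fun c y hy => by
    rw [← f.apply_symm_apply y, ← hf, ← hFE]
    exact F.smul_mem c ((hFE _).2 (by simpa using hy))
  refine ⟨{ toFun x := ⟨f x, (hFE x).1 x.2⟩
            invFun y := ⟨f.symm y, (hFE _).2 (by simp)⟩
            left_inv x := by simp
            right_inv y := by simp
            map_add' x y := by ext; simp },
    fun c => (π c).restrict (hE c), fun c x => ?_⟩
  ext
  simp [hf]

theorem commute_of_map_smul (f : V ≃+ W) (π : k → Module.End k W)
    (hf : ∀ (c : k) (x : V), f (c • x) = π c (f x)) (c d : k) : Commute (π c) (π d) := by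
  ext y
  obtain ⟨x, rfl⟩ := f.surjective y
  simp only [Module.End.mul_apply, ← hf, smul_comm c d]

theorem exists_linearMap_conj_of_map_smul (f : V ≃+ W) (π : k → Module.End k W)
    (hf : ∀ (c : k) (x : V), f (c • x) = π c (f x)) (g : Module.End k W)
    (hg : ∀ c, Commute g (π c)) : ∃ g' : Module.End k V, ∀ x, f (g' x) = g (f x) :=
  ⟨{ toFun x := f.symm (g (f x))
     map_add' x y := by simp
     map_smul' c x := f.injective (by
      simp only [hf, AddEquiv.apply_symm_apply, RingHom.id_apply, ← Module.End.mul_apply,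
        (hg c).eq]) },
    fun x => f.apply_symm_apply _⟩

theorem exists_commute_ker_ne_bot_ne_top [IsAlgClosed k] [FiniteDimensional k W]
    (π : k → Module.End k W) (hπ : ∀ c d, Commute (π c) (π d))
    (h : ¬∀ c, ∃ μ : k, ∀ y, π c y = μ • y) :
    ∃ g : Module.End k W, (∀ c, Commute g (π c)) ∧ LinearMap.ker g ≠ ⊥ ∧ LinearMap.ker g ≠ ⊤ := by
  push Not at h
  obtain ⟨c₀, hc₀⟩ := h
  have : Nontrivial W := by
    by_contra hW
    rw [not_nontrivial_iff_subsingleton] at hW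
    obtain ⟨y, hy⟩ := hc₀ 0
    exact hy (Subsingleton.elim _ _)
  obtain ⟨μ, hμ⟩ := Module.End.exists_eigenvalue (π c₀)
  refine ⟨π c₀ - μ • 1, fun c => (hπ c₀ c).sub_left ((Commute.one_left _).smul_left μ),
    by simpa [Module.End.hasEigenvalue_iff, Module.End.eigenspace_def] using hμ, fun hg => ?_⟩
  obtain ⟨y, hy⟩ := hc₀ μ
  have : (π c₀ - μ • 1) y = 0 := LinearMap.mem_ker.1 (hg ▸ Submodule.mem_top)
  exact hy (by simpa [sub_eq_zero] using this)

theorem finrank_eq_of_addEquiv_of_map_smul [IsAlgClosed k] [FiniteDimensional k V]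
    [FiniteDimensional k W] (f : V ≃+ W) (π : k → Module.End k W)
    (hf : ∀ (c : k) (x : V), f (c • x) = π c (f x)) : finrank k V = finrank k W := by
  induction hn : finrank k W using Nat.strong_induction_on generalizing V W with
  | _ n ih =>
  subst hn
  by_cases hscalar : ∀ c, ∃ μ : k, ∀ y, π c y = μ • y
  · choose σ hσ using hscalar
    exact finrank_eq_of_addEquiv_of_map_smul_eq_smul f σ (fun c x => by rw [hf, hσ])
  obtain ⟨g, hg, h_bot, h_top⟩ :=
    exists_commute_ker_ne_bot_ne_top π (commute_of_map_smul f π hf) hscalar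
  obtain ⟨g', hg'⟩ := exists_linearMap_conj_of_map_smul f π hf g hg
  have ih_sub : ∀ (F : Submodule k V) (E : Submodule k W), finrank k E < finrank k W →
      (∀ x, x ∈ F ↔ f x ∈ E) → finrank k F = finrank k E := fun F E hE hFE => by
    obtain ⟨f', π', hf'⟩ := exists_addEquiv_submodule_of_map_smul f π hf F E hFE
    exact ih _ hE f' π' hf' rfl
  have h_ker_pos : 0 < finrank k (LinearMap.ker g) := Submodule.one_le_finrank_iff.2 h_bot
  have hW := LinearMap.finrank_range_add_finrank_ker g
  have hV := LinearMap.finrank_range_add_finrank_ker g'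
  have h_ker := ih_sub (LinearMap.ker g') (LinearMap.ker g) (Submodule.finrank_lt h_top) fun x => by
    simp [← hg']
  have h_range := ih_sub (LinearMap.range g') (LinearMap.range g) (by omega) fun x =>
    ⟨fun ⟨y, hy⟩ => ⟨f y, by rw [← hg', hy]⟩,
     fun ⟨y, hy⟩ => ⟨f.symm y, f.injective (by rw [hg', AddEquiv.apply_symm_apply, hy])⟩⟩
  omega

theorem finrank_submodule_eq_of_addEquiv_of_map_smul [IsAlgClosed k] [FiniteDimensional k V]
    [FiniteDimensional k W] (f : V ≃+ W) (π : k → Module.End k W)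
    (hf : ∀ (c : k) (x : V), f (c • x) = π c (f x)) (F : Submodule k V) (E : Submodule k W)
    (hFE : ∀ x, x ∈ F ↔ f x ∈ E) : finrank k F = finrank k E := by
  obtain ⟨f', π', hf'⟩ := exists_addEquiv_submodule_of_map_smul f π hf F E hFE
  exact finrank_eq_of_addEquiv_of_map_smul f' π' hf'

end TwistedScalars

section Hom

variable {k : Type*} [Field k] {C : Type*} [Category C] [Preadditive C] [Linear k C]

theorem range_leftComp_comp_iso (Z : C) {A B B' : C} (g : A ⟶ B) (e : B ≅ B') :
    LinearMap.range (Linear.leftComp k Z (g ≫ e.hom)) =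
      LinearMap.range (Linear.leftComp k Z g) := by
  have : Linear.leftComp k Z (g ≫ e.hom) = Linear.leftComp k Z g ∘ₗ Linear.leftComp k Z e.hom := by
    ext; simp
  rw [this, LinearMap.range_comp_of_range_eq_top]
  exact LinearMap.range_eq_top.2 fun t => ⟨e.inv ≫ t, by simp⟩

variable [∀ A B : C, FiniteDimensional k (A ⟶ B)]

theorem Functor.finrank_range_leftComp_map [IsAlgClosed k] {D : Type*} [Category D]
    [Preadditive D] [Linear k D] [∀ A B : D, FiniteDimensional k (A ⟶ B)] (F : C ⥤ D)
    [F.Additive] [F.Full] [F.Faithful] (Z : C) {A B : C} (g : A ⟶ B) :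
    finrank k (LinearMap.range (Linear.leftComp k Z g)) =
      finrank k (LinearMap.range (Linear.leftComp k (F.obj Z) (F.map g))) := by
  refine finrank_submodule_eq_of_addEquiv_of_map_smul
    { (Functor.FullyFaithful.ofFullyFaithful F).homEquiv with map_add' _ _ := F.map_add }
    (fun c => Linear.rightComp k (F.obj A) (F.map (c • 𝟙 Z)))
    (fun c s => show F.map (c • s) = F.map s ≫ F.map (c • 𝟙 Z) by simp [← F.map_comp])
    _ _ fun s => ⟨?_, ?_⟩
  · rintro ⟨t, rfl⟩
    exact ⟨F.map t, (F.map_comp g t).symm⟩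
  · rintro ⟨t, ht : F.map g ≫ t = F.map s⟩
    exact ⟨F.preimage t, F.map_injective (by simpa using ht)⟩

namespace SerreFunctorData

variable (SD : SerreFunctorData k C)

instance : SD.S.IsEquivalence := SD.isEquivalence

noncomputable def homEquivDual (A B : C) : (B ⟶ SD.S.obj A) ≃ₗ[k] Module.Dual k (A ⟶ B) :=
  (Module.evalEquiv k _).trans (SD.pairing A B).dualMap

@[simp] theorem homEquivDual_apply (A B : C) (t : B ⟶ SD.S.obj A) (x : A ⟶ B) :
    SD.homEquivDual A B t x = SD.pairing A B x t := rfl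

theorem eq_zero_of_forall_comp_eq_zero_s10 {A B : C} (t : B ⟶ SD.S.obj A)
    (ht : ∀ q : A ⟶ B, q ≫ t = 0) : t = 0 := by
  refine (SD.homEquivDual A B).map_eq_zero_iff.1 (LinearMap.ext fun q => ?_)
  simpa [ht] using SD.natB (𝟙 A) q t

theorem comp_eq_zero_of_XEpi (𝒳 : Set C) {P M Y : C} {p : P ⟶ M} (hp : XEpi 𝒳 p) {δ : M ⟶ Y}
    (hpδ : p ≫ δ = 0) {X : C} (hX : X ∈ 𝒳) (v : Y ⟶ SD.S.obj X) : δ ≫ v = 0 :=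
  SD.eq_zero_of_forall_comp_eq_zero_s10 _ fun q => by
    obtain ⟨q', rfl⟩ := hp X hX q
    simp [reassoc_of% hpδ]

theorem finrank_range_rightComp (A : C) {B B' : C} (g : B ⟶ B') :
    finrank k (LinearMap.range (Linear.rightComp k A g)) =
      finrank k (LinearMap.range (Linear.leftComp k (SD.S.obj A) g)) := by
  have hcomm : (Linear.rightComp k A g).dualMap ∘ₗ (SD.homEquivDual A B').toLinearMap =
      (SD.homEquivDual A B).toLinearMap ∘ₗ Linear.leftComp k (SD.S.obj A) g := by
    ext t f
    exact SD.natB f g t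
  calc finrank k (LinearMap.range (Linear.rightComp k A g))
      = finrank k (LinearMap.range (Linear.rightComp k A g).dualMap) :=
        (LinearMap.finrank_range_dualMap_eq_finrank_range _).symm
    _ = finrank k (LinearMap.range ((SD.homEquivDual A B).toLinearMap ∘ₗ
          Linear.leftComp k (SD.S.obj A) g)) := by
        rw [← hcomm, LinearMap.range_comp, LinearEquiv.range, Submodule.map_top]
    _ = finrank k (LinearMap.range (Linear.leftComp k (SD.S.obj A) g)) := by
        rw [LinearMap.range_comp]
        exact LinearEquiv.finrank_map_eq _ _

end SerreFunctorData

end Hom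

section Triangulated

variable {k : Type*} [Field k] {C : Type*} [Category C] [Preadditive C] [Linear k C]
  [HasShift C ℤ]

theorem SerreFunctorData.exists_mem_iso_obj_of_shift_mem (SD : SerreFunctorData k C) (𝒳 : Set C)
    (hiso : ∀ {A B : C}, (A ≅ B) → A ∈ 𝒳 → B ∈ 𝒳)
    (hτ : ∀ X : C, X ∈ 𝒳 ↔ ((SD.S.obj X)⟦(-1 : ℤ)⟧) ∈ 𝒳) {Y : C} (hY : Y ∈ 𝒳) :
    ∃ X ∈ 𝒳, Nonempty (Y⟦(1 : ℤ)⟧ ≅ SD.S.obj X) := by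
  let e := SD.S.objObjPreimageIso (Y⟦(1 : ℤ)⟧)
  refine ⟨_, (hτ _).2 (hiso ?_ hY), ⟨e.symm⟩⟩
  exact ((shiftFunctor C (-1 : ℤ)).mapIso e ≪≫
    (shiftFunctorCompIsoId C 1 (-1) (by norm_num)).app Y).symm

theorem range_leftComp_invRotate_mor₁ (T : Triangle C) (Z : C) :
    LinearMap.range (Linear.leftComp k Z T.invRotate.mor₁) =
      LinearMap.range (Linear.leftComp k Z (T.mor₃⟦(-1 : ℤ)⟧')) := by
  have h : Linear.leftComp k Z T.invRotate.mor₁ = -Linear.leftComp k Z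
      (T.mor₃⟦(-1 : ℤ)⟧' ≫ ((shiftEquiv C (1 : ℤ)).unitIso.app T.obj₁).symm.hom) := by
    ext
    exact Preadditive.neg_comp _ _
  exact (congrArg LinearMap.range h).trans
    ((LinearMap.range_neg _).trans (range_leftComp_comp_iso _ _ _))

variable [∀ n : ℤ, (shiftFunctor C n).Additive]

theorem Triangle.invRotate_mor₁_comp_eq_zero (T : Triangle C) {Y : C} (u : T.obj₁ ⟶ Y)
    (hu : T.mor₃ ≫ u⟦(1 : ℤ)⟧' = 0) : T.invRotate.mor₁ ≫ u = 0 := by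
  -- `invRotate.mor₁ = -(T.mor₃⟦-1⟧' ≫ η⁻¹)`, and naturality of `η⁻¹` moves `u` across to `u⟦1⟧⟦-1⟧`
  have h := (shiftEquiv C (1 : ℤ)).unitIso.inv.naturality u
  dsimp at h
  change (-T.mor₃⟦(-1 : ℤ)⟧' ≫ (shiftEquiv C (1 : ℤ)).unitIso.inv.app T.obj₁) ≫ u = 0
  erw [Preadditive.neg_comp, Category.assoc, ← h, ← Functor.map_comp_assoc, hu, Functor.map_zero,
    zero_comp, neg_zero]

variable [HasZeroObject C] [Pretriangulated C] (𝒳 : Set C)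

theorem SerreFunctorData.invRotate_mor₁_comp_eq_zero_of_XEpi
    [∀ A B : C, FiniteDimensional k (A ⟶ B)] (SD : SerreFunctorData k C)
    (hiso : ∀ {A B : C}, (A ≅ B) → A ∈ 𝒳 → B ∈ 𝒳)
    (hτ : ∀ X : C, X ∈ 𝒳 ↔ ((SD.S.obj X)⟦(-1 : ℤ)⟧) ∈ 𝒳) {T : Triangle C}
    (hT : T ∈ distTriang C) (hp : XEpi 𝒳 T.mor₂) {X : C} (hX : X ∈ 𝒳) (u : T.obj₁ ⟶ X) :
    T.invRotate.mor₁ ≫ u = 0 := by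
  obtain ⟨X', hX', ⟨e⟩⟩ := SD.exists_mem_iso_obj_of_shift_mem 𝒳 hiso hτ hX
  refine Triangle.invRotate_mor₁_comp_eq_zero T u ((cancel_mono e.hom).1 ?_)
  rw [Category.assoc, zero_comp]
  exact SD.comp_eq_zero_of_XEpi 𝒳 hp (comp_distTriang_mor_zero₂₃ T hT) hX' (u⟦1⟧' ≫ e.hom)

variable (k)

theorem XHom_eq_ker_rightComp {W X M : C} {a : W ⟶ X} {p : X ⟶ M} {δ : M ⟶ W⟦(1 : ℤ)⟧}
    (hT : Triangle.mk a p δ ∈ distTriang C) (hX : X ∈ 𝒳) (hp : XEpi 𝒳 p) (N : C) :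
    XHom k 𝒳 N M = LinearMap.ker (Linear.rightComp k N δ) := by
  apply le_antisymm
  · rw [XHom, Submodule.span_le]
    rintro _ ⟨X', g, h, hX', rfl⟩
    obtain ⟨h', rfl⟩ := hp X' hX' h
    have hpδ : p ≫ δ = 0 := comp_distTriang_mor_zero₂₃ _ hT
    simp [hpδ]
  · intro f hf
    obtain ⟨g, rfl⟩ := Triangle.coyoneda_exact₃ _ hT f hf
    exact Submodule.subset_span ⟨X, g, p, hX, rfl⟩

theorem XHom_eq_ker_leftComp (T : Triangle C) (hT : T ∈ distTriang C) (h₃ : T.obj₃ ∈ 𝒳)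
    (hmor₁ : ∀ X ∈ 𝒳, ∀ u : T.obj₂ ⟶ X, T.mor₁ ≫ u = 0) (Y : C) :
    XHom k 𝒳 T.obj₂ Y = LinearMap.ker (Linear.leftComp k Y T.mor₁) := by
  apply le_antisymm
  · rw [XHom, Submodule.span_le]
    rintro _ ⟨X, u, h, hX, rfl⟩
    simp [reassoc_of% (hmor₁ X hX u)]
  · intro f hf
    obtain ⟨g, rfl⟩ := T.yoneda_exact₂ hT f hf
    exact Submodule.subset_span ⟨T.obj₃, T.mor₂, g, h₃, rfl⟩

end Triangulated

theorem serre_duality_in_quotient_category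
    (k : Type*) [Field k] [IsAlgClosed k]
    {C : Type*} [Category C] [Preadditive C] [Linear k C] [HasZeroObject C]
    [HasShift C ℤ] [∀ n : ℤ, (CategoryTheory.shiftFunctor C n).Additive]
    [Pretriangulated C] [HasBinaryBiproducts C]
    [∀ A B : C, FiniteDimensional k (A ⟶ B)] [IsIdempotentComplete C]
    (SD : SerreFunctorData k C)
    (𝒳 : Set C)
    (hiso : ∀ {A B : C}, (A ≅ B) → A ∈ 𝒳 → B ∈ 𝒳)
    (hsum : ∀ {A B : C}, A ∈ 𝒳 → B ∈ 𝒳 → (A ⊞ B) ∈ 𝒳)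
    (hsummand : ∀ {A B : C} (i : A ⟶ B) (r : B ⟶ A), i ≫ r = 𝟙 A → B ∈ 𝒳 → A ∈ 𝒳)
    -- `𝒳` is precovering and preenveloping:
    (hprecov : ∀ M : C, ∃ (X : C) (p : X ⟶ M), X ∈ 𝒳 ∧ XEpi 𝒳 p)
    (hpreenv : ∀ M : C, ∃ (X : C) (e : M ⟶ X), X ∈ 𝒳 ∧ XMono 𝒳 e)
    -- `τ𝒳 = 𝒳`, where `τ = Σ⁻¹ ∘ S`:
    (hτ : ∀ X : C, X ∈ 𝒳 ↔ ((SD.S.obj X)⟦(-1 : ℤ)⟧) ∈ 𝒳)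
    (M N W XM : C) (a : W ⟶ XM) (p : XM ⟶ M) (δ : M ⟶ W⟦(1 : ℤ)⟧)
    (hT : Triangle.mk a p δ ∈ distTriang C)
    (hXM : XM ∈ 𝒳) (hp : XEpi 𝒳 p) :
    Nonempty
      (((N ⟶ M) ⧸ XHom k 𝒳 N M) ≃ₗ[k]
        Module.Dual k
          ((W ⟶ (SD.S.obj N)⟦(-1 : ℤ)⟧) ⧸ XHom k 𝒳 W ((SD.S.obj N)⟦(-1 : ℤ)⟧))) := by
  let T := Triangle.mk a p δ
  have hkill : ∀ X ∈ 𝒳, ∀ u : W ⟶ X, T.invRotate.mor₁ ≫ u = 0 := fun X hX u =>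
    SD.invRotate_mor₁_comp_eq_zero_of_XEpi 𝒳 hiso hτ hT hp hX u
  let Z := (SD.S.obj N)⟦(-1 : ℤ)⟧
  have hN := XHom_eq_ker_rightComp k 𝒳 hT hXM hp N
  have hW := XHom_eq_ker_leftComp k 𝒳 T.invRotate (inv_rot_of_distTriang _ hT) hXM hkill Z
  refine ⟨LinearEquiv.ofFinrankEq _ _ ?_⟩
  rw [Subspace.dual_finrank_eq]
  calc finrank k ((N ⟶ M) ⧸ XHom k 𝒳 N M)
      = finrank k (LinearMap.range (Linear.rightComp k N δ)) :=
        ((Submodule.quotEquivOfEq _ _ hN).trans (LinearMap.quotKerEquivRange _)).finrank_eq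
    _ = finrank k (LinearMap.range (Linear.leftComp k (SD.S.obj N) δ)) :=
        SD.finrank_range_rightComp N δ
    _ = finrank k (LinearMap.range (Linear.leftComp k Z (δ⟦(-1 : ℤ)⟧'))) :=
        Functor.finrank_range_leftComp_map (shiftFunctor C (-1 : ℤ)) _ δ
    _ = finrank k (LinearMap.range (Linear.leftComp k Z T.invRotate.mor₁)) :=
        congrArg (fun S : Submodule k _ => finrank k S) (range_leftComp_invRotate_mor₁ T Z).symm
    _ = finrank k ((W ⟶ Z) ⧸ XHom k 𝒳 W Z) :=
        ((Submodule.quotEquivOfEq _ _ hW).trans (LinearMap.quotKerEquivRange _)).finrank_eq.symm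
end

section
/- Let M → X → P → ΣM and M → X' → P' → ΣM be two distinguished triangles in 𝖳 in which M → X and M → X' are both 𝒳-preenvelopes of M. Then P and P' become isomorphic in the quotient by 𝒳: there exist morphisms p : P → P' and q : P' → P such that id_P − q∘p factors through an object of 𝒳 and id_{P'} − p∘q factors through an object of 𝒳. (Hence the object σM of the quotient category 𝖳_𝒳 is independent of the choice of 𝒳-preenvelope.) -/
/-!
Since `X'` lies in `𝒳` and `M → X` is an `𝒳`-monomorphism, `M → X'` factors through `M → X`;
completing to a morphism of triangles over `𝟙 M` gives `p : P ⟶ P'` compatible with the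
connecting maps to `M⟦1⟧`, and symmetrically `q : P' ⟶ P`. Then `𝟙 P - p ≫ q` is killed by
`P ⟶ M⟦1⟧`, so by exactness it factors through `X ⟶ P`, hence through `X ∈ 𝒳`; likewise for `P'`.
-/

open CategoryTheory CategoryTheory.Limits CategoryTheory.Pretriangulated

lemma id_sub_comp_comp_eq_zero {C : Type*} [Category C] [Preadditive C] {P P' Q : C}
    {h : P ⟶ Q} {h' : P' ⟶ Q} {p : P ⟶ P'} {q : P' ⟶ P} (hp : p ≫ h' = h) (hq : q ≫ h = h') :
    (𝟙 P - p ≫ q) ≫ h = 0 := by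
  rw [Preadditive.sub_comp, Category.id_comp, Category.assoc, hq, hp, sub_self]

section

variable {C : Type*} [Category C] [Preadditive C] [HasZeroObject C] [HasShift C ℤ]
  [∀ n : ℤ, (shiftFunctor C n).Additive] [Pretriangulated C]

lemma exists_comp_mor₃_eq_of_xMono (𝒳 : Set C) {M X P X' P' : C}
    {e : M ⟶ X} {g : X ⟶ P} {h : P ⟶ M⟦(1 : ℤ)⟧}
    {e' : M ⟶ X'} {g' : X' ⟶ P'} {h' : P' ⟶ M⟦(1 : ℤ)⟧}
    (hT : Triangle.mk e g h ∈ distTriang C) (hT' : Triangle.mk e' g' h' ∈ distTriang C)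
    (hX' : X' ∈ 𝒳) (he : XMono 𝒳 e) :
    ∃ p : P ⟶ P', p ≫ h' = h := by
  obtain ⟨a, ha⟩ := he X' hX' e'
  obtain ⟨p, -, hp⟩ := complete_distinguished_triangle_morphism _ _ hT hT' (𝟙 M) a
    (ha.trans (Category.id_comp _).symm)
  -- `Functor.map_id` does not fire on `𝟙 (Triangle.mk e g h).obj₁` until `Triangle.mk` is unfolded.
  dsimp only [Triangle.mk] at p hp
  change h ≫ (shiftFunctor C (1 : ℤ)).map (𝟙 M) = p ≫ h' at hp
  refine ⟨p, ?_⟩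
  rwa [CategoryTheory.Functor.map_id, Category.comp_id, eq_comm] at hp

lemma factorsThroughClass_of_comp_mor₃_eq_zero (𝒳 : Set C) {T : Triangle C}
    (hT : T ∈ distTriang C) (hX : T.obj₂ ∈ 𝒳) {A : C} (f : A ⟶ T.obj₃)
    (hf : f ≫ T.mor₃ = 0) : FactorsThroughClass 𝒳 f := by
  obtain ⟨s, hs⟩ := Triangle.coyoneda_exact₃ T hT f hf
  exact ⟨T.obj₂, s, T.mor₂, hX, hs.symm⟩

end

theorem cone_of_preenvelope_unique_up_to_X_isomorphism
    {C : Type*} [Category C] [Preadditive C] [HasZeroObject C] [HasShift C ℤ]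
    [∀ n : ℤ, (CategoryTheory.shiftFunctor C n).Additive] [Pretriangulated C]
    (𝒳 : Set C)
    (M X P X' P' : C)
    (e : M ⟶ X) (g : X ⟶ P) (h : P ⟶ M⟦(1 : ℤ)⟧)
    (e' : M ⟶ X') (g' : X' ⟶ P') (h' : P' ⟶ M⟦(1 : ℤ)⟧)
    (hT : Triangle.mk e g h ∈ distTriang C)
    (hT' : Triangle.mk e' g' h' ∈ distTriang C)
    (hX : X ∈ 𝒳) (he : XMono 𝒳 e)
    (hX' : X' ∈ 𝒳) (he' : XMono 𝒳 e') :
    ∃ (p : P ⟶ P') (q : P' ⟶ P),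
      FactorsThroughClass 𝒳 (𝟙 P - p ≫ q) ∧ FactorsThroughClass 𝒳 (𝟙 P' - q ≫ p) := by
  obtain ⟨p, hp⟩ := exists_comp_mor₃_eq_of_xMono 𝒳 hT hT' hX' he
  obtain ⟨q, hq⟩ := exists_comp_mor₃_eq_of_xMono 𝒳 hT' hT hX he'
  exact ⟨p, q,
    factorsThroughClass_of_comp_mor₃_eq_zero 𝒳 hT hX _ (id_sub_comp_comp_eq_zero hp hq),
    factorsThroughClass_of_comp_mor₃_eq_zero 𝒳 hT' hX' _ (id_sub_comp_comp_eq_zero hq hp)⟩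
end
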